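/- arXiv:0907.1958 — 2 statements merged into one kernel-verified Lean document; each statement's English description precedes it below -/
import Mathlib

section
/- Let G' be a finite simple graph with an automorphism γ' satisfying γ'³ = id, and suppose G' has a (C₃,γ') 3Tree2 partition. Let G be a (C₃,γ') vertex addition of G' by new vertices v,w,z (on distinct base vertices v₁,v₂ ∈ V(G')), and let γ be the automorphism of G that restricts to γ' on V(G') and acts as the 3-cycle (v w z) on {v,w,z}. Then G has a (C₃,γ) 3Tree2 partition. -/
open Matrix

noncomputable section

namespace C3Laman

variable {V : Type*} [Fintype V] [DecidableEq V]

/-- A 3Tree2 partition of `G`: three subtrees of `G` such that every edge of `G` lies in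
exactly one of them, and every vertex of `G` lies in exactly two of them. -/
def Is3Tree2Partition (G : SimpleGraph V) (T : Fin 3 → G.Subgraph) : Prop :=
  (∀ i, (T i).coe.IsTree) ∧
  (∀ e ∈ G.edgeSet, ∃! i : Fin 3, e ∈ (T i).edgeSet) ∧
  ∀ v : V, ({i : Fin 3 | v ∈ (T i).verts}).ncard = 2

/-- A proper 3Tree2 partition: no non-trivial subtrees of distinct trees have the same
vertex set. -/
def IsProper3Tree2Partition (G : SimpleGraph V) (T : Fin 3 → G.Subgraph) : Prop :=
  Is3Tree2Partition G T ∧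
  ∀ i j : Fin 3, i ≠ j → ∀ Si Sj : G.Subgraph, Si ≤ T i → Sj ≤ T j →
    Si.coe.IsTree → Sj.coe.IsTree →
    2 ≤ Si.verts.ncard → 2 ≤ Sj.verts.ncard → Si.verts ≠ Sj.verts

/-- A `(C₃, γ)` 3Tree2 partition: a 3Tree2 partition with `γ(Tᵢ) = T_{i+1}` (mod 3). -/
def IsC3_3Tree2Partition (G : SimpleGraph V) (γ : G ≃g G) (T : Fin 3 → G.Subgraph) : Prop :=
  Is3Tree2Partition G T ∧ ∀ i : Fin 3, (T i).map γ.toHom = T (i + 1)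

/-- A `(C₃, γ')` vertex addition of `G'` on distinct base vertices `v₁, v₂`, realized on
the vertex type `V ⊕ Fin 3` with the three new vertices
`v = Sum.inr 0, w = Sum.inr 1, z = Sum.inr 2`. -/
def vertexAdditionGraph (G' : SimpleGraph V) (γ' : G' ≃g G') (v₁ v₂ : V) :
    SimpleGraph (V ⊕ Fin 3) :=
  SimpleGraph.fromEdgeSet
    (Sym2.map Sum.inl '' G'.edgeSet ∪
      {s((Sum.inr 0 : V ⊕ Fin 3), Sum.inl v₁), s((Sum.inr 0 : V ⊕ Fin 3), Sum.inl v₂),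
       s((Sum.inr 1 : V ⊕ Fin 3), Sum.inl (γ' v₁)),
       s((Sum.inr 1 : V ⊕ Fin 3), Sum.inl (γ' v₂)),
       s((Sum.inr 2 : V ⊕ Fin 3), Sum.inl (γ' (γ' v₁))),
       s((Sum.inr 2 : V ⊕ Fin 3), Sum.inl (γ' (γ' v₂)))})

section AuxLemmas
open SimpleGraph
variable {W : Type*}

lemma isAcyclic_of_iso {α β : Type*} {G : SimpleGraph α} {H : SimpleGraph β}
    (e : G ≃g H) (hG : G.IsAcyclic) : H.IsAcyclic := by
  intro v c hc
  exact hG (c.map e.symm.toHom) (hc.map e.symm.toEquiv.injective)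

lemma isTree_of_iso {α β : Type*} {G : SimpleGraph α} {H : SimpleGraph β}
    (e : G ≃g H) (hG : G.IsTree) : H.IsTree :=
  ⟨e.connected_iff.mp hG.1, isAcyclic_of_iso e hG.2⟩

/-- Iso between a subgraph's coe and its image under an injective hom. -/
noncomputable def mapCoeIso {α β : Type*} {G : SimpleGraph α} {G₂ : SimpleGraph β} (f : G →g G₂)
    (hf : Function.Injective f) (H : G.Subgraph) : H.coe ≃g (H.map f).coe where
  toEquiv := Equiv.Set.image f H.verts hf
  map_rel_iff' := by
    rintro ⟨x, hx⟩ ⟨y, hy⟩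
    constructor
    · rintro ⟨x', y', h, hx', hy'⟩
      rw [hf hx', hf hy'] at h
      exact h
    · intro h
      exact ⟨x, y, h, rfl, rfl⟩

/-- Lift a walk in `H.spanningCoe` to a walk in `H.coe`. -/
def liftWalk {G : SimpleGraph W} (H : G.Subgraph) :
    ∀ {a b : W} (_ : H.spanningCoe.Walk a b) (ha : a ∈ H.verts) (hb : b ∈ H.verts),
      H.coe.Walk ⟨a, ha⟩ ⟨b, hb⟩
  | _, _, SimpleGraph.Walk.nil, _, _ => SimpleGraph.Walk.nil
  | _, _, SimpleGraph.Walk.cons h p, ha, hb =>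
      SimpleGraph.Walk.cons (by exact h) (liftWalk H p (H.edge_vert (H.adj_symm h)) hb)

/-- The inclusion hom from `H.coe` to `H.spanningCoe`. -/
def inclHom {G : SimpleGraph W} (H : G.Subgraph) : H.coe →g H.spanningCoe :=
  ⟨Subtype.val, fun {_ _} h => h⟩

lemma liftWalk_map {G : SimpleGraph W} (H : G.Subgraph) {a b : W}
    (p : H.spanningCoe.Walk a b) (ha : a ∈ H.verts) (hb : b ∈ H.verts) :
    (liftWalk H p ha hb).map (inclHom H) = p := by
  induction p with
  | nil => rfl
  | cons h p ih => simp only [liftWalk, Walk.map_cons, ih]; exact congrArg (Walk.cons h) (ih _ hb)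

lemma coe_acyclic_iff_spanning {G : SimpleGraph W} (H : G.Subgraph) :
    H.coe.IsAcyclic ↔ H.spanningCoe.IsAcyclic := by
  constructor
  · intro hH v c hc
    have hv : v ∈ H.verts := by
      cases c with
      | nil => exact absurd rfl hc.ne_nil
      | cons h p => exact H.edge_vert h
    have hmap : (liftWalk H c hv hv).map (inclHom H) = c := liftWalk_map H c hv hv
    have : (liftWalk H c hv hv).IsCycle := by
      rw [← Walk.map_isCycle_iff_of_injective (f := inclHom H) Subtype.val_injective, hmap]
      exact hc
    exact hH _ this
  · intro hH v c hc
    exact hH _ (hc.map (f := inclHom H) Subtype.val_injective)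

lemma subgraphOfAdj_congr {G : SimpleGraph W} {x y x' y' : W} (h : G.Adj x y)
    (h' : G.Adj x' y') (hx : x = x') (hy : y = y') :
    G.subgraphOfAdj h = G.subgraphOfAdj h' := by subst hx; subst hy; rfl

lemma edgeSet_map' {α β : Type*} {G : SimpleGraph α} {G₂ : SimpleGraph β} (f : G →g G₂)
    (H : G.Subgraph) : (H.map f).edgeSet = Sym2.map f '' H.edgeSet := by
  ext e
  induction e using Sym2.inductionOn with
  | _ a b =>
    simp only [Subgraph.mem_edgeSet, Subgraph.map_adj, Relation.Map, Set.mem_image]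
    constructor
    · rintro ⟨x, y, h, rfl, rfl⟩
      exact ⟨s(x, y), Subgraph.mem_edgeSet.mpr h, Sym2.map_pair_eq f x y⟩
    · rintro ⟨e', he', hmap⟩
      revert he' hmap
      induction e' using Sym2.inductionOn with
      | _ x y =>
        intro he' hmap
        rw [Sym2.map_pair_eq, Sym2.eq_iff] at hmap
        rcases hmap with ⟨rfl, rfl⟩ | ⟨rfl, rfl⟩
        · exact ⟨x, y, Subgraph.mem_edgeSet.mp he', rfl, rfl⟩
        · exact ⟨y, x, H.adj_symm (Subgraph.mem_edgeSet.mp he'), rfl, rfl⟩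

lemma pendant_tree [DecidableEq W] {G : SimpleGraph W} {H : G.Subgraph} {x u : W}
    (hT : H.coe.IsTree) (hadj : G.Adj x u) (hu : u ∈ H.verts) (hx : x ∉ H.verts) :
    (H ⊔ G.subgraphOfAdj hadj).coe.IsTree := by
  have hxu : x ≠ u := hadj.ne
  constructor
  · exact (Subgraph.connected_sup ⟨hT.1.preconnected⟩ (Subgraph.subgraphOfAdj_connected hadj).preconnected
      ⟨u, hu, by simp⟩).coe
  · rw [coe_acyclic_iff_spanning]
    intro v c hc
    have hyu : ∀ {x' y' : W}, x' = x → (H ⊔ G.subgraphOfAdj hadj).Adj x' y' → y' = u := by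
      intro x' y' hx' h
      subst hx'
      rcases Subgraph.sup_adj.mp h with h' | h'
      · exact absurd (H.edge_vert h') hx
      · rw [subgraphOfAdj_adj, Sym2.eq_iff] at h'
        rcases h' with ⟨h2, h3⟩ | ⟨h2, h3⟩
        · exact h3.symm
        · exact absurd h3.symm hxu
    by_cases hxs : x ∈ c.support
    · have hc' := hc.rotate hxs
      obtain ⟨y, h1, q, hq⟩ := Walk.not_nil_iff.mp hc'.not_nil
      have hy : y = u := hyu rfl h1
      subst y
      have hqlen : 2 ≤ q.length := by
        have h3 := hc'.three_le_length
        rw [hq, Walk.length_cons] at h3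
        omega
      have hqrev : ¬ q.reverse.Nil := by
        rw [Walk.not_nil_iff_lt_length, Walk.length_reverse]
        omega
      obtain ⟨y2, h2, r, hr⟩ := Walk.not_nil_iff.mp hqrev
      have hy2 : y2 = u := hyu rfl h2
      subst y2
      have hmem : s(x, u) ∈ q.edges := by
        have : s(x, u) ∈ q.reverse.edges := by
          rw [hr, Walk.edges_cons]
          exact List.mem_cons_self
        rwa [Walk.edges_reverse, List.mem_reverse] at this
      have hnodup := hc'.isCircuit.isTrail.edges_nodup
      rw [hq, Walk.edges_cons] at hnodup
      exact (List.nodup_cons.mp hnodup).1 hmem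
    · have hHacyc : H.spanningCoe.IsAcyclic := (coe_acyclic_iff_spanning H).mp hT.2
      have hedges : ∀ e ∈ c.edges, e ∈ H.spanningCoe.edgeSet := by
        intro e he
        revert he
        induction e using Sym2.inductionOn with
        | _ a' b' =>
          intro he
          have hGadj : (H ⊔ G.subgraphOfAdj hadj).Adj a' b' := c.edges_subset_edgeSet he
          rcases Subgraph.sup_adj.mp hGadj with h | h
          · exact h
          · rw [subgraphOfAdj_adj, Sym2.eq_iff] at h
            rcases h with ⟨rfl, rfl⟩ | ⟨rfl, rfl⟩
            · exact absurd (c.fst_mem_support_of_mem_edges he) hxs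
            · exact absurd (c.snd_mem_support_of_mem_edges he) hxs
      exact hHacyc _ (hc.transfer hedges)

lemma aux_main {V : Type*} [Fintype V] [DecidableEq V]
    (G' : SimpleGraph V) (γ' : G' ≃g G')
    (T : Fin 3 → G'.Subgraph) (hT : IsC3_3Tree2Partition G' γ' T)
    (P1 P2 : Fin 3 → V)
    (hP1 : ∀ k, γ' (P1 k) = P1 (k + 1)) (hP2 : ∀ k, γ' (P2 k) = P2 (k + 1))
    (hPne : ∀ k, P1 k ≠ P2 k)
    (a b : Fin 3) (hab : a ≠ b)
    (hP1m : P1 0 ∈ (T a).verts) (hP2m : P2 0 ∈ (T b).verts)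
    (G : SimpleGraph (V ⊕ Fin 3))
    (hGE : ∀ e, e ∈ G.edgeSet ↔
      (∃ e' ∈ G'.edgeSet, Sym2.map Sum.inl e' = e) ∨
      (∃ k : Fin 3, e = s(Sum.inr k, Sum.inl (P1 k)) ∨ e = s(Sum.inr k, Sum.inl (P2 k))))
    (γ : G ≃g G) (hres : ∀ x, γ (Sum.inl x) = Sum.inl (γ' x))
    (hγr : ∀ k : Fin 3, γ (Sum.inr k) = Sum.inr (k + 1)) :
    ∃ T' : Fin 3 → G.Subgraph, IsC3_3Tree2Partition G γ T' := by
  obtain ⟨⟨htree, hedge, hvert⟩, hequiv⟩ := hT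
  have hshift : ∀ (j : Fin 3) (y : V), y ∈ (T j).verts → γ' y ∈ (T (j + 1)).verts := by
    intro j y hy
    rw [← hequiv j]
    exact ⟨y, hy, rfl⟩
  have hstep1 : ∀ (k j : Fin 3), P1 k ∈ (T j).verts → P1 (k + 1) ∈ (T (j + 1)).verts :=
    fun k j h => hP1 k ▸ hshift j _ h
  have hstep2 : ∀ (k j : Fin 3), P2 k ∈ (T j).verts → P2 (k + 1) ∈ (T (j + 1)).verts :=
    fun k j h => hP2 k ▸ hshift j _ h
  have hP1mem : ∀ k : Fin 3, P1 k ∈ (T (a + k)).verts := by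
    have h1 := hstep1 0 a hP1m
    rw [zero_add] at h1
    have h2 := hstep1 1 (a + 1) h1
    rw [add_assoc] at h2
    intro k
    fin_cases k
    · show P1 0 ∈ (T (a + 0)).verts
      rwa [add_zero]
    · exact h1
    · exact h2
  have hP2mem : ∀ k : Fin 3, P2 k ∈ (T (b + k)).verts := by
    have h1 := hstep2 0 b hP2m
    rw [zero_add] at h1
    have h2 := hstep2 1 (b + 1) h1
    rw [add_assoc] at h2
    intro k
    fin_cases k
    · show P2 0 ∈ (T (b + 0)).verts
      rwa [add_zero]
    · exact h1
    · exact h2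
  have hA : ∀ k : Fin 3, G.Adj (Sum.inr k) (Sum.inl (P1 k)) := fun k =>
    G.mem_edgeSet.mp ((hGE _).mpr (Or.inr ⟨k, Or.inl rfl⟩))
  have hB : ∀ k : Fin 3, G.Adj (Sum.inr k) (Sum.inl (P2 k)) := fun k =>
    G.mem_edgeSet.mp ((hGE _).mpr (Or.inr ⟨k, Or.inr rfl⟩))
  have hinlAdj : ∀ {x y : V}, G'.Adj x y → G.Adj (Sum.inl x) (Sum.inl y) := by
    intro x y h
    exact G.mem_edgeSet.mp ((hGE _).mpr
      (Or.inl ⟨s(x, y), G'.mem_edgeSet.mpr h, Sym2.map_pair_eq _ _ _⟩))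
  let homInl : G' →g G := ⟨Sum.inl, fun {x y} h => hinlAdj h⟩
  have hcoe : (homInl : V → V ⊕ Fin 3) = Sum.inl := rfl
  have hia : ∀ i : Fin 3, a + (i - a) = i := fun i => by abel
  have hib : ∀ i : Fin 3, b + (i - b) = i := fun i => by abel
  have hnoinr : ∀ (e' : Sym2 V) (k : Fin 3) (p : V),
      Sym2.map Sum.inl e' ≠ s((Sum.inr k : V ⊕ Fin 3), Sum.inl p) := by
    intro e' k p
    induction e' using Sym2.inductionOn with
    | _ x y =>
      rw [Sym2.map_pair_eq]
      simp [Sym2.eq_iff]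
  have hT'edge : ∀ (i : Fin 3) (e : Sym2 (V ⊕ Fin 3)),
      e ∈ (((T i).map homInl ⊔ G.subgraphOfAdj (hA (i - a)))
          ⊔ G.subgraphOfAdj (hB (i - b))).edgeSet ↔
        ((∃ e' ∈ (T i).edgeSet, Sym2.map Sum.inl e' = e)
          ∨ e = s(Sum.inr (i - a), Sum.inl (P1 (i - a)))
          ∨ e = s(Sum.inr (i - b), Sum.inl (P2 (i - b)))) := by
    intro i e
    rw [Subgraph.edgeSet_sup, Subgraph.edgeSet_sup, edgeSet_map', edgeSet_subgraphOfAdj,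
      edgeSet_subgraphOfAdj]
    simp only [Set.mem_union, Set.mem_image, Set.mem_singleton_iff, hcoe, or_assoc]
  refine ⟨fun i => ((T i).map homInl ⊔ G.subgraphOfAdj (hA (i - a)))
      ⊔ G.subgraphOfAdj (hB (i - b)), ⟨⟨?_, ?_, ?_⟩, ?_⟩⟩
  · -- trees
    intro i
    have hia : a + (i - a) = i := by abel
    have hib : b + (i - b) = i := by abel
    have t0 : ((T i).map homInl).coe.IsTree :=
      isTree_of_iso (mapCoeIso homInl Sum.inl_injective (T i)) (htree i)
    have hu1 : Sum.inl (P1 (i - a)) ∈ ((T i).map homInl).verts :=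
      Set.mem_image_of_mem _ (by have h := hP1mem (i - a); rwa [hia] at h)
    have hx1 : Sum.inr (i - a) ∉ ((T i).map homInl).verts := by
      rintro ⟨y, -, hy⟩
      exact Sum.inl_ne_inr hy
    have t1 := pendant_tree t0 (hA (i - a)) hu1 hx1
    have hu2 : Sum.inl (P2 (i - b)) ∈ ((T i).map homInl ⊔ G.subgraphOfAdj (hA (i - a))).verts :=
      Or.inl (Set.mem_image_of_mem _ (by have h := hP2mem (i - b); rwa [hib] at h))
    have hx2 : Sum.inr (i - b) ∉ ((T i).map homInl ⊔ G.subgraphOfAdj (hA (i - a))).verts := by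
      rintro (⟨y, -, hy⟩ | hy)
      · exact Sum.inl_ne_inr hy
      · rcases hy with hy | hy
        · rw [Sum.inr.injEq] at hy
          exact hab (sub_right_inj.mp hy).symm
        · exact Sum.inr_ne_inl (Set.mem_singleton_iff.mp hy)
    exact pendant_tree t1 (hB (i - b)) hu2 hx2
  · -- edge partition
    intro e he
    rcases (hGE e).mp he with ⟨e', he', rfl⟩ | ⟨k, hk | hk⟩
    · obtain ⟨i, hi, huniq⟩ := hedge e' he'
      refine ⟨i, (hT'edge i _).mpr (Or.inl ⟨e', hi, rfl⟩), ?_⟩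
      intro j hj
      rcases (hT'edge j _).mp hj with ⟨e'', he'', heq⟩ | h | h
      · exact huniq j ((Sym2.map.injective Sum.inl_injective heq) ▸ he'')
      · exact absurd h (hnoinr e' _ _)
      · exact absurd h (hnoinr e' _ _)
    · subst hk
      refine ⟨a + k, (hT'edge (a + k) _).mpr
        (Or.inr (Or.inl (by rw [add_sub_cancel_left]))), ?_⟩
      intro j hj
      rcases (hT'edge j _).mp hj with ⟨e'', he'', heq⟩ | h | h
      · exact absurd heq (hnoinr e'' _ _)
      · rw [Sym2.eq_iff] at h
        rcases h with ⟨h1, h2⟩ | ⟨h1, h2⟩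
        · rw [Sum.inr.injEq] at h1
          subst h1
          exact ((by abel : a + (j - a) = j)).symm
        · exact absurd h1 (by simp)
      · rw [Sym2.eq_iff] at h
        rcases h with ⟨h1, h2⟩ | ⟨h1, h2⟩
        · rw [Sum.inr.injEq] at h1
          rw [Sum.inl.injEq] at h2
          subst h1
          exact absurd h2 (hPne _)
        · exact absurd h1 (by simp)
    · subst hk
      refine ⟨b + k, (hT'edge (b + k) _).mpr
        (Or.inr (Or.inr (by rw [add_sub_cancel_left]))), ?_⟩
      intro j hj
      rcases (hT'edge j _).mp hj with ⟨e'', he'', heq⟩ | h | h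
      · exact absurd heq (hnoinr e'' _ _)
      · rw [Sym2.eq_iff] at h
        rcases h with ⟨h1, h2⟩ | ⟨h1, h2⟩
        · rw [Sum.inr.injEq] at h1
          rw [Sum.inl.injEq] at h2
          subst h1
          exact absurd h2.symm (hPne _)
        · exact absurd h1 (by simp)
      · rw [Sym2.eq_iff] at h
        rcases h with ⟨h1, h2⟩ | ⟨h1, h2⟩
        · rw [Sum.inr.injEq] at h1
          subst h1
          exact ((by abel : b + (j - b) = j)).symm
        · exact absurd h1 (by simp)
  · -- vertices
    intro x
    cases x with
    | inl y =>
      have hset : {i : Fin 3 | Sum.inl y ∈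
          (((T i).map homInl ⊔ G.subgraphOfAdj (hA (i - a)))
            ⊔ G.subgraphOfAdj (hB (i - b))).verts} = {i : Fin 3 | y ∈ (T i).verts} := by
        ext i
        simp only [Set.mem_setOf_eq, Subgraph.verts_sup, Subgraph.map_verts,
          subgraphOfAdj_verts, Set.mem_union, Set.mem_image, Set.mem_insert_iff,
          Set.mem_singleton_iff]
        constructor
        · rintro ((⟨y', hy', hEq⟩ | h) | h)
          · rw [hcoe, Sum.inl.injEq] at hEq
            rwa [← hEq]
          · rcases h with h | h
            · exact absurd h (by simp)
            · rw [Sum.inl.injEq] at h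
              rw [h]
              have h' := hP1mem (i - a)
              rwa [hia i] at h'
          · rcases h with h | h
            · exact absurd h (by simp)
            · rw [Sum.inl.injEq] at h
              rw [h]
              have h' := hP2mem (i - b)
              rwa [hib i] at h'
        · intro h
          exact Or.inl (Or.inl ⟨y, h, rfl⟩)
      rw [hset]
      exact hvert y
    | inr k =>
      have hset : {i : Fin 3 | Sum.inr k ∈
          (((T i).map homInl ⊔ G.subgraphOfAdj (hA (i - a)))
            ⊔ G.subgraphOfAdj (hB (i - b))).verts} = {a + k, b + k} := by
        ext i
        simp only [Set.mem_setOf_eq, Subgraph.verts_sup, Subgraph.map_verts,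
          subgraphOfAdj_verts, Set.mem_union, Set.mem_image, Set.mem_insert_iff,
          Set.mem_singleton_iff]
        constructor
        · rintro ((⟨y', -, hEq⟩ | h) | h)
          · exact absurd hEq (by simp [hcoe])
          · rcases h with h | h
            · rw [Sum.inr.injEq] at h
              subst h
              exact Or.inl ((by abel : a + (i - a) = i)).symm
            · exact absurd h (by simp)
          · rcases h with h | h
            · rw [Sum.inr.injEq] at h
              subst h
              exact Or.inr ((by abel : b + (i - b) = i)).symm
            · exact absurd h (by simp)
        · rintro (rfl | rfl)
          · exact Or.inl (Or.inr (Or.inl (by rw [add_sub_cancel_left])))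
          · exact Or.inr (Or.inl (by rw [add_sub_cancel_left]))
      rw [hset]
      exact Set.ncard_pair (fun h => hab (add_right_cancel h))
  · -- equivariance
    intro i
    have e1 : ((T i).map homInl).map γ.toHom = (T (i + 1)).map homInl := by
      rw [← Subgraph.map_comp]
      have hcomp : (γ.toHom : G →g G).comp homInl = homInl.comp γ'.toHom :=
        DFunLike.ext _ _ fun x => hres x
      rw [hcomp, Subgraph.map_comp, hequiv i]
    have e2 : (G.subgraphOfAdj (hA (i - a))).map γ.toHom
        = G.subgraphOfAdj (hA (i - a + 1)) := by
      rw [map_subgraphOfAdj]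
      refine subgraphOfAdj_congr _ _ (hγr _) ?_
      show γ (Sum.inl (P1 (i - a))) = Sum.inl (P1 (i - a + 1))
      rw [hres, hP1]
    have e3 : (G.subgraphOfAdj (hB (i - b))).map γ.toHom
        = G.subgraphOfAdj (hB (i - b + 1)) := by
      rw [map_subgraphOfAdj]
      refine subgraphOfAdj_congr _ _ (hγr _) ?_
      show γ (Sum.inl (P2 (i - b))) = Sum.inl (P2 (i - b + 1))
      rw [hres, hP2]
    rw [Subgraph.map_sup, Subgraph.map_sup, e1, e2, e3]
    have ha' : i - a + 1 = i + 1 - a := by abel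
    have hb' : i - b + 1 = i + 1 - b := by abel
    have e4 : G.subgraphOfAdj (hA (i - a + 1)) = G.subgraphOfAdj (hA (i + 1 - a)) :=
      subgraphOfAdj_congr _ _ (by rw [ha']) (by rw [ha'])
    have e5 : G.subgraphOfAdj (hB (i - b + 1)) = G.subgraphOfAdj (hB (i + 1 - b)) :=
      subgraphOfAdj_congr _ _ (by rw [hb']) (by rw [hb'])
    rw [e4, e5]

end AuxLemmas

/-- If `G'` (with automorphism `γ'`, `γ'³ = id`) has a `(C₃, γ')` 3Tree2 partition, `G`
is a `(C₃, γ')` vertex addition of `G'` by new vertices `v, w, z`, and `γ` is the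
automorphism of `G` restricting to `γ'` on `V(G')` and acting as the 3-cycle `(v w z)`
on the new vertices, then `G` has a `(C₃, γ)` 3Tree2 partition. -/
theorem c3_vertex_addition_3Tree2 {V : Type*} [Fintype V] [DecidableEq V]
    (G' : SimpleGraph V) (γ' : G' ≃g G') (hγ3 : ∀ u, γ' (γ' (γ' u)) = u)
    (T : Fin 3 → G'.Subgraph) (hT : IsC3_3Tree2Partition G' γ' T)
    (v₁ v₂ : V) (h12 : v₁ ≠ v₂)
    (γ : vertexAdditionGraph G' γ' v₁ v₂ ≃g vertexAdditionGraph G' γ' v₁ v₂)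
    (hres : ∀ x : V, γ (Sum.inl x) = Sum.inl (γ' x))
    (h0 : γ (Sum.inr 0) = Sum.inr 1) (h1 : γ (Sum.inr 1) = Sum.inr 2)
    (h2 : γ (Sum.inr 2) = Sum.inr 0) :
    ∃ T' : Fin 3 → (vertexAdditionGraph G' γ' v₁ v₂).Subgraph,
      IsC3_3Tree2Partition (vertexAdditionGraph G' γ' v₁ v₂) γ T' := by
  classical
  have h2a := hT.1.2.2 v₁
  have h2b := hT.1.2.2 v₂
  rw [Set.ncard_eq_two] at h2a h2b
  obtain ⟨a1, a2, ha12, hseta⟩ := h2a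
  obtain ⟨b1, b2, hb12, hsetb⟩ := h2b
  have hva1 : v₁ ∈ (T a1).verts := by
    have : a1 ∈ {i : Fin 3 | v₁ ∈ (T i).verts} := by
      rw [hseta]; exact Set.mem_insert _ _
    exact this
  have hvb1 : v₂ ∈ (T b1).verts := by
    have : b1 ∈ {i : Fin 3 | v₂ ∈ (T i).verts} := by
      rw [hsetb]; exact Set.mem_insert _ _
    exact this
  have hvb2 : v₂ ∈ (T b2).verts := by
    have : b2 ∈ {i : Fin 3 | v₂ ∈ (T i).verts} := by
      rw [hsetb]; exact Set.mem_insert_of_mem _ rfl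
    exact this
  obtain ⟨b, hbv, hbne⟩ : ∃ b, v₂ ∈ (T b).verts ∧ b ≠ a1 := by
    by_cases hb1a : b1 = a1
    · exact ⟨b2, hvb2, by rw [← hb1a]; exact hb12.symm⟩
    · exact ⟨b1, hvb1, hb1a⟩
  refine aux_main G' γ' T hT ![v₁, γ' v₁, γ' (γ' v₁)] ![v₂, γ' v₂, γ' (γ' v₂)]
      ?_ ?_ ?_ a1 b (fun h => hbne h.symm) (by simpa using hva1) (by simpa using hbv)
      (vertexAdditionGraph G' γ' v₁ v₂) ?_ γ hres ?_
  · intro k; fin_cases k <;> simp [hγ3 v₁]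
  · intro k; fin_cases k <;> simp [hγ3 v₂]
  · intro k; fin_cases k <;> simp [h12]
  · intro e
    rw [vertexAdditionGraph, SimpleGraph.edgeSet_fromEdgeSet]
    constructor
    · rintro ⟨hS, hd⟩
      rcases hS with ⟨e', he', rfl⟩ | h
      · exact Or.inl ⟨e', he', rfl⟩
      · right
        simp only [Set.mem_insert_iff, Set.mem_singleton_iff] at h
        rcases h with rfl | rfl | rfl | rfl | rfl | rfl
        · exact ⟨0, Or.inl (by simp)⟩
        · exact ⟨0, Or.inr (by simp)⟩
        · exact ⟨1, Or.inl (by simp)⟩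
        · exact ⟨1, Or.inr (by simp)⟩
        · exact ⟨2, Or.inl (by simp)⟩
        · exact ⟨2, Or.inr (by simp)⟩
    · rintro (⟨e', he', rfl⟩ | ⟨k, rfl | rfl⟩)
      · refine ⟨Or.inl ⟨e', he', rfl⟩, ?_⟩
        revert he'
        induction e' using Sym2.inductionOn with
        | _ x y =>
          intro he'
          have hxy : x ≠ y := (G'.mem_edgeSet.mp he').ne
          simp [Sym2.map_pair_eq, Sym2.mk_isDiag_iff, hxy]
      · constructor
        · refine Or.inr ?_
          fin_cases k <;> simp
        · simp [Sym2.mk_isDiag_iff]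
      · constructor
        · refine Or.inr ?_
          fin_cases k <;> simp
        · simp [Sym2.mk_isDiag_iff]
  · intro k
    fin_cases k
    · simpa using h0
    · simpa using h1
    · simpa using h2


end C3Laman
end
end

section
/- Let G' be a finite simple graph with an automorphism γ' satisfying γ'³ = id, and suppose G' has a (C₃,γ') 3Tree2 partition. Let G be a (C₃,γ') Δ extension of G' by new vertices v,w,z (on a base vertex v₀ ∈ V(G') with γ'(v₀) ≠ v₀), and let γ be the automorphism of G that restricts to γ' on V(G') and acts as the 3-cycle (v w z) on {v,w,z}. Then G has a (C₃,γ) 3Tree2 partition. -/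
open Matrix

noncomputable section

namespace C3Laman

variable {V : Type*} [Fintype V] [DecidableEq V]

/-- A `(C₃, γ')` Δ extension of `G'` on a base vertex `v₀` (with `γ' v₀ ≠ v₀`), realized
on the vertex type `V ⊕ Fin 3` with the three new vertices
`v = Sum.inr 0, w = Sum.inr 1, z = Sum.inr 2`:  a triangle on the new vertices is added,
together with the three edges joining them to `v₀, γ' v₀, γ'² v₀` respectively. -/
def deltaExtensionGraph (G' : SimpleGraph V) (γ' : G' ≃g G') (v₀ : V) :
    SimpleGraph (V ⊕ Fin 3) :=
  SimpleGraph.fromEdgeSet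
    (Sym2.map Sum.inl '' G'.edgeSet ∪
      {s((Sum.inr 0 : V ⊕ Fin 3), (Sum.inr 1 : V ⊕ Fin 3)),
       s((Sum.inr 1 : V ⊕ Fin 3), (Sum.inr 2 : V ⊕ Fin 3)),
       s((Sum.inr 2 : V ⊕ Fin 3), (Sum.inr 0 : V ⊕ Fin 3)),
       s((Sum.inr 0 : V ⊕ Fin 3), Sum.inl v₀),
       s((Sum.inr 1 : V ⊕ Fin 3), Sum.inl (γ' v₀)),
       s((Sum.inr 2 : V ⊕ Fin 3), Sum.inl (γ' (γ' v₀)))})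

/-! ### Auxiliary general graph lemmas -/

section Aux

variable {α β : Type*}

lemma walk_lift {A : SimpleGraph α} {B : SimpleGraph β} (f : A →g B)
    (hinj : Function.Injective f)
    (hsurj : ∀ ⦃x y⦄, B.Adj x y → ∃ a b, A.Adj a b ∧ f a = x ∧ f b = y) :
    ∀ {s t : β} (p : B.Walk s t) (x w : α) (hx : f x = s) (hw : f w = t),
      ∃ q : A.Walk x w, q.map f = p.copy hx.symm hw.symm := by
  intro s t p
  induction p with
  | nil =>
    intro x w hx hw
    obtain rfl : x = w := hinj (hx.trans hw.symm)
    subst hx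
    exact ⟨SimpleGraph.Walk.nil, by simp⟩
  | @cons u y t h p ih =>
    intro x w hx hw
    obtain ⟨a, b, hab, ha, hb⟩ := hsurj h
    obtain rfl : a = x := hinj (ha.trans hx.symm)
    obtain ⟨q, hq⟩ := ih b w hb hw
    subst hx
    subst hb
    subst hw
    exact ⟨SimpleGraph.Walk.cons hab q, by simp [hq]⟩

lemma isAcyclic_of_hom {A : SimpleGraph α} {B : SimpleGraph β} (f : A →g B)
    (hinj : Function.Injective f)
    (hsurj : ∀ ⦃x y⦄, B.Adj x y → ∃ a b, A.Adj a b ∧ f a = x ∧ f b = y)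
    (hA : A.IsAcyclic) : B.IsAcyclic := by
  intro v c hc
  cases c with
  | nil => exact hc.not_of_nil
  | cons h p =>
    obtain ⟨a, b, hab, ha, hb⟩ := hsurj h
    obtain ⟨q, hq⟩ := walk_lift f hinj hsurj (SimpleGraph.Walk.cons h p) a a ha ha
    have : q.IsCycle := by
      rw [← SimpleGraph.Walk.map_isCycle_iff_of_injective hinj, hq]
      subst ha
      simpa using hc
    exact hA q this

variable [DecidableEq α]

lemma isAcyclic_sup_edge {A : SimpleGraph α} (hA : A.IsAcyclic) {a b : α} (hab : a ≠ b)
    (hisol : ∀ x, ¬ A.Adj a x) :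
    (A ⊔ SimpleGraph.fromEdgeSet {s(a, b)}).IsAcyclic := by
  set B := A ⊔ SimpleGraph.fromEdgeSet {s(a, b)} with hB
  have hBadj : ∀ x, B.Adj a x → x = b := by
    intro x hx
    rcases hx with h | h
    · exact absurd h (hisol x)
    · rw [SimpleGraph.fromEdgeSet_adj] at h
      have := h.1
      simp only [Set.mem_singleton_iff, Sym2.eq_iff] at this
      rcases this with ⟨_, rfl⟩ | ⟨rfl, rfl⟩
      · rfl
      · rfl
  intro v c hc
  by_cases hmem : a ∈ c.support
  · have hc' := hc.rotate hmem
    set c' := c.rotate a hmem with hc'def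
    clear_value c'
    cases c' with
    | nil => exact hc'.not_of_nil
    | cons h q =>
      rename_i y
      have hy : b = y := (hBadj y h).symm
      subst hy
      have hqnil : ¬ q.Nil := fun hn => hab (hn.eq.symm ▸ rfl)
      have hrevnil : ¬ q.reverse.Nil := by
        rw [SimpleGraph.Walk.nil_iff_length_eq, SimpleGraph.Walk.length_reverse]
        rw [SimpleGraph.Walk.nil_iff_length_eq] at hqnil
        exact hqnil
      obtain ⟨x, hx, q2, hq2⟩ := SimpleGraph.Walk.not_nil_iff.mp hrevnil
      have hx2 : b = x := (hBadj x hx).symm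
      subst hx2
      have hmem2 : s(a, b) ∈ q.edges := by
        have : s(a, b) ∈ q.reverse.edges := by
          rw [hq2]; simp
        rwa [SimpleGraph.Walk.edges_reverse, List.mem_reverse] at this
      have hnodup := hc'.edges_nodup
      rw [SimpleGraph.Walk.edges_cons] at hnodup
      exact (List.nodup_cons.mp hnodup).1 hmem2
  · have hedges : ∀ e ∈ c.edges, e ∈ A.edgeSet := by
      intro e he
      have := SimpleGraph.Walk.edges_subset_edgeSet c he
      rw [hB, SimpleGraph.edgeSet_sup, SimpleGraph.edgeSet_fromEdgeSet] at this
      rcases this with h | h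
      · exact h
      · exfalso
        obtain ⟨h1, -⟩ := h
        rw [Set.mem_singleton_iff] at h1
        subst h1
        exact hmem (SimpleGraph.Walk.fst_mem_support_of_mem_edges c he)
    exact hA (c.transfer A hedges) (hc.transfer hedges)

variable {G : SimpleGraph α} {G₂ : SimpleGraph β}

lemma spanningCoe_sup (H K : G.Subgraph) :
    (H ⊔ K).spanningCoe = H.spanningCoe ⊔ K.spanningCoe := rfl

lemma spanningCoe_subgraphOfAdj {a b : α} (h : G.Adj a b) :
    (G.subgraphOfAdj h).spanningCoe = SimpleGraph.fromEdgeSet {s(a, b)} := by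
  ext x y
  simp only [SimpleGraph.Subgraph.spanningCoe_adj, SimpleGraph.subgraphOfAdj_adj,
    SimpleGraph.fromEdgeSet_adj, Set.mem_singleton_iff]
  constructor
  · intro he
    refine ⟨he.symm, ?_⟩
    rintro rfl
    rw [Sym2.eq_iff] at he
    rcases he with ⟨rfl, rfl⟩ | ⟨rfl, rfl⟩ <;> exact h.ne rfl
  · rintro ⟨he, -⟩
    exact he.symm

lemma coe_isAcyclic_of_spanningCoe {H : G.Subgraph} (h : H.spanningCoe.IsAcyclic) :
    H.coe.IsAcyclic := by
  intro v c hc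
  have hmap : (c.map ⟨Subtype.val, fun hadj => hadj⟩ : H.spanningCoe.Walk v v).IsCycle :=
    hc.map Subtype.val_injective
  exact h _ hmap

lemma subgraph_connected_map (f : G →g G₂) {H : G.Subgraph} (h : H.Connected) :
    (H.map f).Connected := by
  rw [SimpleGraph.Subgraph.connected_iff']
  let hhom : H.coe →g (H.map f).coe := by
    refine ⟨fun x => ⟨f x, ⟨x, x.2, rfl⟩⟩, ?_⟩
    intro a b hab
    exact ⟨a, b, hab, rfl, rfl⟩
  refine (SimpleGraph.Subgraph.connected_iff'.mp h).map hhom ?_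
  rintro ⟨_, ⟨x, hx, rfl⟩⟩
  exact ⟨⟨x, hx⟩, rfl⟩

lemma map_subgraphOfAdj (f : G →g G₂) {a b : α} (h : G.Adj a b) :
    (G.subgraphOfAdj h).map f = G₂.subgraphOfAdj (f.map_adj h) := by
  ext x y
  · simp [Set.image_insert_eq]
  · simp only [SimpleGraph.Subgraph.map_adj, SimpleGraph.subgraphOfAdj_adj, Relation.Map]
    constructor
    · rintro ⟨u, v, huv, rfl, rfl⟩
      rw [Sym2.eq_iff] at huv ⊢
      rcases huv with ⟨rfl, rfl⟩ | ⟨rfl, rfl⟩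
      · exact Or.inl ⟨rfl, rfl⟩
      · exact Or.inr ⟨rfl, rfl⟩
    · intro he
      rw [Sym2.eq_iff] at he
      rcases he with ⟨rfl, rfl⟩ | ⟨rfl, rfl⟩
      · exact ⟨a, b, by simp, rfl, rfl⟩
      · exact ⟨b, a, by simp [Sym2.eq_swap], rfl, rfl⟩

lemma subgraphOfAdj_eq_of_eq {a b a' b' : α} (ha : a = a') (hb : b = b')
    (h : G.Adj a b) (h' : G.Adj a' b') :
    G.subgraphOfAdj h = G.subgraphOfAdj h' := by
  subst ha; subst hb; rfl

end Aux

/-! ### Specific auxiliary defs for the Δ extension -/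

section Delta

variable (G' : SimpleGraph V) (γ' : G' ≃g G') (v₀ : V)

/-- The base vertices `v₀, γ' v₀, γ'² v₀`. -/
def dBase : Fin 3 → V := ![v₀, γ' v₀, γ' (γ' v₀)]

lemma delta_adj_inl {a b : V} (h : G'.Adj a b) :
    (deltaExtensionGraph G' γ' v₀).Adj (Sum.inl a) (Sum.inl b) := by
  rw [deltaExtensionGraph, SimpleGraph.fromEdgeSet_adj]
  refine ⟨Or.inl ⟨s(a, b), h, ?_⟩, by simp [h.ne]⟩
  rfl

/-- The inclusion homomorphism `G' →g deltaExtensionGraph G' γ' v₀`. -/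
def dHom : G' →g (deltaExtensionGraph G' γ' v₀) :=
  ⟨Sum.inl, fun h => delta_adj_inl G' γ' v₀ h⟩

lemma delta_adj_pend (k : Fin 3) :
    (deltaExtensionGraph G' γ' v₀).Adj (Sum.inl (dBase G' γ' v₀ k)) (Sum.inr k) := by
  rw [deltaExtensionGraph, SimpleGraph.fromEdgeSet_adj]
  refine ⟨Or.inr ?_, by simp⟩
  fin_cases k <;> simp [dBase, Sym2.eq_swap]

lemma delta_adj_tri (k : Fin 3) :
    (deltaExtensionGraph G' γ' v₀).Adj (Sum.inr k) (Sum.inr (k + 1)) := by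
  rw [deltaExtensionGraph, SimpleGraph.fromEdgeSet_adj]
  refine ⟨Or.inr ?_, by simp⟩
  fin_cases k <;> simp

end Delta

set_option maxHeartbeats 1600000 in
/-- If `G'` (with automorphism `γ'`, `γ'³ = id`) has a `(C₃, γ')` 3Tree2 partition, `G`
is a `(C₃, γ')` Δ extension of `G'` by new vertices `v, w, z` on a base vertex `v₀` with
`γ' v₀ ≠ v₀`, and `γ` is the automorphism of `G` restricting to `γ'` on `V(G')` and
acting as the 3-cycle `(v w z)` on the new vertices, then `G` has a `(C₃, γ)` 3Tree2
partition. -/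
theorem c3_delta_extension_3Tree2 {V : Type*} [Fintype V] [DecidableEq V]
    (G' : SimpleGraph V) (γ' : G' ≃g G') (hγ3 : ∀ u, γ' (γ' (γ' u)) = u)
    (T : Fin 3 → G'.Subgraph) (hT : IsC3_3Tree2Partition G' γ' T)
    (v₀ : V) (hfix : γ' v₀ ≠ v₀)
    (γ : deltaExtensionGraph G' γ' v₀ ≃g deltaExtensionGraph G' γ' v₀)
    (hres : ∀ x : V, γ (Sum.inl x) = Sum.inl (γ' x))
    (h0 : γ (Sum.inr 0) = Sum.inr 1) (h1 : γ (Sum.inr 1) = Sum.inr 2)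
    (h2 : γ (Sum.inr 2) = Sum.inr 0) :
    ∃ T' : Fin 3 → (deltaExtensionGraph G' γ' v₀).Subgraph,
      IsC3_3Tree2Partition (deltaExtensionGraph G' γ' v₀) γ T' := by
  obtain ⟨⟨htree, hedge, hvert⟩, hmapT⟩ := hT
  -- Fin 3 arithmetic facts
  have fin1 : ∀ a b : Fin 3, a + b - a = b := by intro a b; open Fin.CommRing in ring
  have fin2 : ∀ a b : Fin 3, a + (b - a) = b := by intro a b; open Fin.CommRing in ring
  have fin3 : ∀ a b : Fin 3, a - b + 1 = a + 1 - b := by intro a b; open Fin.CommRing in ring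
  have fin4 : ∀ a : Fin 3, a ≠ a - 1 := by decide
  have fin5 : ∀ a : Fin 3, a + 1 ≠ a := by decide
  have fin6 : ∀ a b : Fin 3, a = b + 1 → a + 1 = b → False := by decide
  -- choose a tree containing v₀
  have hvne : ∃ i, v₀ ∈ (T i).verts := by
    by_contra h
    push_neg at h
    have hempty : {i : Fin 3 | v₀ ∈ (T i).verts} = ∅ :=
      Set.eq_empty_iff_forall_notMem.mpr h
    have := hvert v₀
    rw [hempty] at this
    simp at this
  obtain ⟨i, hvi⟩ := hvne
  have hvmap : ∀ j, γ' '' (T j).verts = (T (j + 1)).verts := by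
    intro j
    conv_rhs => rw [← hmapT j]
    rfl
  have hbs : ∀ k, γ' (dBase G' γ' v₀ k) = dBase G' γ' v₀ (k + 1) := by
    intro k
    fin_cases k
    · rfl
    · rfl
    · simpa [dBase] using hγ3 v₀
  have hvbase : ∀ k, dBase G' γ' v₀ k ∈ (T (i + k)).verts := by
    intro k
    fin_cases k
    · simpa [dBase] using hvi
    · have : γ' v₀ ∈ γ' '' (T i).verts := ⟨v₀, hvi, rfl⟩
      rw [hvmap i] at this
      simpa [dBase] using this
    · have h1' : γ' v₀ ∈ (T (i + 1)).verts := by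
        have : γ' v₀ ∈ γ' '' (T i).verts := ⟨v₀, hvi, rfl⟩
        rwa [hvmap i] at this
      have : γ' (γ' v₀) ∈ γ' '' (T (i + 1)).verts := ⟨γ' v₀, h1', rfl⟩
      rw [hvmap (i + 1)] at this
      have he : i + 1 + 1 = i + (2 : Fin 3) := by open Fin.CommRing in ring
      rw [he] at this
      simpa [dBase] using this
  -- the new trees
  set M : Fin 3 → (deltaExtensionGraph G' γ' v₀).Subgraph :=
    fun j => (T j).map (dHom G' γ' v₀) with hM
  set F : Fin 3 → (deltaExtensionGraph G' γ' v₀).Subgraph :=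
    fun j => M j ⊔ (deltaExtensionGraph G' γ' v₀).subgraphOfAdj (delta_adj_pend G' γ' v₀ (j - i))
      ⊔ (deltaExtensionGraph G' γ' v₀).subgraphOfAdj (delta_adj_tri G' γ' v₀ (j - i)) with hF
  -- basic characterizations
  have hMnoR : ∀ j (m : Fin 3) (x : V ⊕ Fin 3), ¬ (M j).Adj (Sum.inr m) x := by
    rintro j m x ⟨a, b, -, hab, -⟩
    simp [dHom] at hab
  have hMadj : ∀ j (a b : V), (M j).Adj (Sum.inl a) (Sum.inl b) ↔ (T j).Adj a b := by
    intro j a b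
    constructor
    · rintro ⟨u, v, huv, hu, hv⟩
      have hu' : Sum.inl u = Sum.inl a := hu
      have hv' : Sum.inl v = Sum.inl b := hv
      obtain rfl : u = a := Sum.inl.inj hu'
      obtain rfl : v = b := Sum.inl.inj hv'
      exact huv
    · intro h
      exact ⟨a, b, h, rfl, rfl⟩
  have hFverts : ∀ j, (F j).verts =
      (Sum.inl '' (T j).verts) ∪ {Sum.inl (dBase G' γ' v₀ (j - i)), Sum.inr (j - i)}
        ∪ {Sum.inr (j - i), Sum.inr (j - i + 1)} := by
    intro j
    have hMverts : (M j).verts = Sum.inl '' (T j).verts := rfl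
    simp [hF, SimpleGraph.Subgraph.verts_sup, hMverts]
  have hFedge : ∀ j e, e ∈ (F j).edgeSet ↔ e ∈ (M j).edgeSet
      ∨ e = s(Sum.inl (dBase G' γ' v₀ (j - i)), Sum.inr (j - i))
      ∨ e = s(Sum.inr (j - i), Sum.inr (j - i + 1)) := by
    intro j e
    simp only [hF, SimpleGraph.Subgraph.edgeSet_sup, SimpleGraph.edgeSet_subgraphOfAdj,
      Set.mem_union, Set.mem_singleton_iff]
    tauto
  have hMedge : ∀ j (e : Sym2 V), Sym2.map Sum.inl e ∈ (M j).edgeSet ↔ e ∈ (T j).edgeSet := by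
    intro j e
    induction e with
    | _ a b =>
      rw [Sym2.map_pair_eq, SimpleGraph.Subgraph.mem_edgeSet, SimpleGraph.Subgraph.mem_edgeSet,
        hMadj]
  -- vertex condition
  have keyV : ∀ x : V ⊕ Fin 3, ({j : Fin 3 | x ∈ (F j).verts}).ncard = 2 := by
    rintro (x | m)
    · have hsame : {j : Fin 3 | Sum.inl x ∈ (F j).verts} = {j : Fin 3 | x ∈ (T j).verts} := by
        ext j
        simp only [Set.mem_setOf_eq, hFverts j, Set.mem_union, Set.mem_image,
          Set.mem_insert_iff, Set.mem_singleton_iff]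
        constructor
        · rintro ((⟨a, ha, hax⟩ | (h | h)) | (h | h))
          · obtain rfl : a = x := Sum.inl.inj hax
            exact ha
          · obtain rfl : x = dBase G' γ' v₀ (j - i) := Sum.inl.inj h
            have := hvbase (j - i)
            rwa [fin2] at this
          · simp at h
          · simp at h
          · simp at h
        · intro hx
          exact Or.inl (Or.inl ⟨x, hx, rfl⟩)
      rw [hsame]
      exact hvert x
    · have hsame : {j : Fin 3 | Sum.inr m ∈ (F j).verts} = {i + m, i + m - 1} := by
        ext j
        simp only [Set.mem_setOf_eq, hFverts j, Set.mem_union, Set.mem_image,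
          Set.mem_insert_iff, Set.mem_singleton_iff]
        constructor
        · rintro ((⟨a, _, hax⟩ | (h | h)) | (h | h))
          · simp at hax
          · simp at h
          · obtain rfl : m = j - i := Sum.inr.inj h
            left; rw [fin2]
          · obtain rfl : m = j - i := Sum.inr.inj h
            left; rw [fin2]
          · have hm : m = j - i + 1 := Sum.inr.inj h
            right
            have hji : j - i = m - 1 := by rw [hm]; open Fin.CommRing in ring
            rw [← fin2 i j, hji]; open Fin.CommRing in ring
        · rintro (rfl | rfl)
          · left; right; right
            rw [fin1]
          · right; right
            have : i + m - 1 - i + 1 = m := by open Fin.CommRing in ring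
            rw [this]
      rw [hsame, Set.ncard_pair (fin4 (i + m))]
  -- edge condition
  have hpend : ∀ k : Fin 3,
      ∃! j : Fin 3, s(Sum.inl (dBase G' γ' v₀ k), Sum.inr k) ∈ (F j).edgeSet := by
    intro k
    refine ⟨i + k, ?_, ?_⟩
    · show s(Sum.inl (dBase G' γ' v₀ k), Sum.inr k) ∈ (F (i + k)).edgeSet
      rw [hFedge]
      right; left
      rw [fin1]
    · intro j' h
      have h' : s(Sum.inl (dBase G' γ' v₀ k), Sum.inr k) ∈ (F j').edgeSet := h
      rw [hFedge] at h'
      rcases h' with h' | h' | h'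
      · exfalso
        rw [Sym2.eq_swap] at h'
        exact hMnoR j' k _ h'
      · rw [Sym2.eq_iff] at h'
        rcases h' with ⟨-, h2'⟩ | ⟨h1', -⟩
        · obtain rfl : k = j' - i := Sum.inr.inj h2'
          rw [fin2]
        · simp at h1'
      · exfalso
        rw [Sym2.eq_iff] at h'
        rcases h' with ⟨h1', -⟩ | ⟨h1', -⟩ <;> simp at h1'
  have htri : ∀ k : Fin 3,
      ∃! j : Fin 3, s(Sum.inr k, Sum.inr (k + 1)) ∈ (F j).edgeSet := by
    intro k
    refine ⟨i + k, ?_, ?_⟩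
    · show s(Sum.inr k, Sum.inr (k + 1)) ∈ (F (i + k)).edgeSet
      rw [hFedge]
      right; right
      rw [fin1]
    · intro j' h
      have h' : s(Sum.inr k, Sum.inr (k + 1)) ∈ (F j').edgeSet := h
      rw [hFedge] at h'
      rcases h' with h' | h' | h'
      · exact absurd h' (hMnoR j' k _)
      · exfalso
        rw [Sym2.eq_iff] at h'
        rcases h' with ⟨h1', -⟩ | ⟨-, h2'⟩
        · simp at h1'
        · simp at h2'
      · rw [Sym2.eq_iff] at h'
        rcases h' with ⟨ha, -⟩ | ⟨ha, hb⟩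
        · obtain rfl : k = j' - i := Sum.inr.inj ha
          rw [fin2]
        · exact absurd (fin6 k (j' - i) (Sum.inr.inj ha) (Sum.inr.inj hb)) not_false
  have keyE : ∀ e ∈ (deltaExtensionGraph G' γ' v₀).edgeSet, ∃! j : Fin 3, e ∈ (F j).edgeSet := by
    intro e he
    rw [deltaExtensionGraph, SimpleGraph.edgeSet_fromEdgeSet] at he
    obtain ⟨hmem, hdiag⟩ := he
    rcases hmem with ⟨e₀, he₀, rfl⟩ | hmem
    · obtain ⟨j, hj, hjun⟩ := hedge e₀ he₀
      refine ⟨j, ?_, ?_⟩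
      · show Sym2.map Sum.inl e₀ ∈ (F j).edgeSet
        rw [hFedge]
        exact Or.inl ((hMedge j e₀).mpr hj)
      · intro j' hj'
        have hj'' : Sym2.map Sum.inl e₀ ∈ (F j').edgeSet := hj'
        rw [hFedge] at hj''
        rcases hj'' with h | h | h
        · exact hjun j' ((hMedge j' e₀).mp h)
        · exfalso
          revert h
          induction e₀ using Sym2.ind with
          | _ a b => simp [Sym2.map_pair_eq, Sym2.eq_iff]
        · exfalso
          revert h
          induction e₀ using Sym2.ind with
          | _ a b => simp [Sym2.map_pair_eq, Sym2.eq_iff]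
    · simp only [Set.mem_insert_iff, Set.mem_singleton_iff] at hmem
      rcases hmem with rfl | rfl | rfl | rfl | rfl | rfl
      · exact htri 0
      · exact htri 1
      · exact htri 2
      · have := hpend 0
        rwa [show s(Sum.inl (dBase G' γ' v₀ 0), (Sum.inr 0 : V ⊕ Fin 3)) =
          s(Sum.inr 0, Sum.inl v₀) by rw [Sym2.eq_swap]; rfl] at this
      · have := hpend 1
        rwa [show s(Sum.inl (dBase G' γ' v₀ 1), (Sum.inr 1 : V ⊕ Fin 3)) =
          s(Sum.inr 1, Sum.inl (γ' v₀)) by rw [Sym2.eq_swap]; rfl] at this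
      · have := hpend 2
        rwa [show s(Sum.inl (dBase G' γ' v₀ 2), (Sum.inr 2 : V ⊕ Fin 3)) =
          s(Sum.inr 2, Sum.inl (γ' (γ' v₀))) by rw [Sym2.eq_swap]; rfl] at this
  -- trees
  have keyT : ∀ j, (F j).coe.IsTree := by
    intro j
    have hbase_in : dBase G' γ' v₀ (j - i) ∈ (T j).verts := by
      have := hvbase (j - i)
      rwa [fin2] at this
    have hconnM : (M j).Connected :=
      subgraph_connected_map _ (SimpleGraph.Subgraph.connected_iff'.mpr (htree j).isConnected)
    have hc1 : (M j ⊔ (deltaExtensionGraph G' γ' v₀).subgraphOfAdj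
        (delta_adj_pend G' γ' v₀ (j - i))).Connected := by
      refine SimpleGraph.Subgraph.connected_sup hconnM.preconnected (SimpleGraph.Subgraph.subgraphOfAdj_connected _).preconnected ?_
      refine ⟨Sum.inl (dBase G' γ' v₀ (j - i)), ?_⟩
      rw [SimpleGraph.Subgraph.verts_inf]
      exact ⟨⟨_, hbase_in, rfl⟩, Or.inl rfl⟩
    have hc2 : (F j).Connected := by
      rw [hF]
      refine SimpleGraph.Subgraph.connected_sup hc1.preconnected (SimpleGraph.Subgraph.subgraphOfAdj_connected _).preconnected ?_
      refine ⟨Sum.inr (j - i), ?_⟩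
      rw [SimpleGraph.Subgraph.verts_inf]
      constructor
      · rw [SimpleGraph.Subgraph.verts_sup]
        right
        simp
      · simp
    have hacyM : (M j).spanningCoe.IsAcyclic := by
      refine isAcyclic_of_hom
        (⟨fun x => Sum.inl (x : V), fun hab => ⟨_, _, hab, rfl, rfl⟩⟩ :
          (T j).coe →g (M j).spanningCoe)
        (fun x y h => Subtype.ext (Sum.inl.inj h)) ?_ (htree j).IsAcyclic
      rintro x y ⟨a, b, hab, rfl, rfl⟩
      exact ⟨⟨a, (T j).edge_vert hab⟩, ⟨b, (T j).edge_vert hab.symm⟩, hab, rfl, rfl⟩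
    have hne1 : (Sum.inr (j - i) : V ⊕ Fin 3) ≠ Sum.inl (dBase G' γ' v₀ (j - i)) := by simp
    have hstep1 := isAcyclic_sup_edge hacyM hne1 (fun x => hMnoR j (j - i) x)
    rw [show ({s(Sum.inr (j - i), Sum.inl (dBase G' γ' v₀ (j - i)))} : Set (Sym2 (V ⊕ Fin 3))) =
      {s(Sum.inl (dBase G' γ' v₀ (j - i)), Sum.inr (j - i))} by rw [Sym2.eq_swap]] at hstep1
    have hne2 : (Sum.inr (j - i + 1) : V ⊕ Fin 3) ≠ Sum.inr (j - i) := by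
      simp only [ne_eq, Sum.inr.injEq]
      exact fin5 (j - i)
    have hisol2 : ∀ x, ¬ ((M j).spanningCoe ⊔
        SimpleGraph.fromEdgeSet {s(Sum.inl (dBase G' γ' v₀ (j - i)), Sum.inr (j - i))}).Adj
        (Sum.inr (j - i + 1)) x := by
      rintro x (h | h)
      · exact hMnoR j (j - i + 1) x h
      · rw [SimpleGraph.fromEdgeSet_adj] at h
        have := h.1
        simp only [Set.mem_singleton_iff, Sym2.eq_iff] at this
        rcases this with ⟨h1, -⟩ | ⟨h2, -⟩
        · simp at h1
        · rw [Sum.inr.injEq] at h2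
          exact fin5 (j - i) h2
    have hstep2 := isAcyclic_sup_edge hstep1 hne2 hisol2
    have hspan : (F j).spanningCoe = ((M j).spanningCoe ⊔
        SimpleGraph.fromEdgeSet {s(Sum.inl (dBase G' γ' v₀ (j - i)), Sum.inr (j - i))}) ⊔
        SimpleGraph.fromEdgeSet {s(Sum.inr (j - i + 1), Sum.inr (j - i))} := by
      rw [hF]
      rw [spanningCoe_sup, spanningCoe_sup, spanningCoe_subgraphOfAdj, spanningCoe_subgraphOfAdj]
      congr 1
      rw [Sym2.eq_swap]
    have hacy : (F j).coe.IsAcyclic := coe_isAcyclic_of_spanningCoe (by rw [hspan]; exact hstep2)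
    exact ⟨hc2.coe, hacy⟩
  -- equivariance
  have homeq : γ.toHom.comp (dHom G' γ' v₀) = (dHom G' γ' v₀).comp γ'.toHom := by
    ext x
    exact hres x
  have hγinr : ∀ k : Fin 3, γ (Sum.inr k) = Sum.inr (k + 1) := by
    intro k
    fin_cases k
    · exact h0
    · exact h1
    · exact h2
  have keyM : ∀ j, (F j).map γ.toHom = F (j + 1) := by
    intro j
    rw [hF]
    simp only [SimpleGraph.Subgraph.map_sup]
    congr 1
    · congr 1
      · rw [hM]
        rw [← SimpleGraph.Subgraph.map_comp, homeq, SimpleGraph.Subgraph.map_comp, hmapT j]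
      · rw [map_subgraphOfAdj]
        refine subgraphOfAdj_eq_of_eq ?_ ?_ _ _
        · show γ (Sum.inl (dBase G' γ' v₀ (j - i))) = Sum.inl (dBase G' γ' v₀ (j + 1 - i))
          rw [hres, hbs, fin3]
        · show γ (Sum.inr (j - i)) = Sum.inr (j + 1 - i)
          rw [hγinr, fin3]
    · rw [map_subgraphOfAdj]
      refine subgraphOfAdj_eq_of_eq ?_ ?_ _ _
      · show γ (Sum.inr (j - i)) = Sum.inr (j + 1 - i)
        rw [hγinr, fin3]
      · show γ (Sum.inr (j - i + 1)) = Sum.inr (j + 1 - i + 1)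
        rw [hγinr, fin3]
  exact ⟨F, ⟨⟨keyT, keyE, keyV⟩, keyM⟩⟩

end C3Laman
end
end
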